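/- arXiv:2603.23193 — 3 statements merged into one kernel-verified Lean document; each statement's English description precedes it below -/
import Mathlib

section
/- Let D be an oriented tree, i.e., a digraph with no 2-cycle whose underlying undirected graph is a tree. Then the set Ext(D) of extremal vertices of D is a minimum geodetic set of D. -/
/-!
A directed walk in an oriented graph never runs back along the edge it just used, and in a forest
such a walk is a path. So in an oriented forest there is at most one directed walk between two
vertices (every directed walk is a shortest one) and there are no directed cycles. In a finite
digraph without directed cycles every vertex lies on a walk from a source to a sink, so the
extremal vertices form a geodetic set. Conversely, a source can lie on a walk only as its first
vertex and a sink only as its last, so every geodetic set contains all extremal vertices.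
-/

namespace GeoPaper

variable {V : Type*}

/-- A directed walk from `u` to `v` in the digraph with arc relation `D`,
represented by the list of its vertices. -/
def IsWalk (D : V → V → Prop) (u v : V) (p : List V) : Prop :=
  p.Chain' D ∧ p.head? = some u ∧ p.getLast? = some v

/-- `interval D u v` is the set of vertices lying on some shortest directed
path from `u` to `v` (i.e. a directed walk of minimum length from `u` to `v`). -/
def interval (D : V → V → Prop) (u v : V) : Set V :=
  {x | ∃ p, IsWalk D u v p ∧ (∀ q, IsWalk D u v q → p.length ≤ q.length) ∧ x ∈ p}

/-- `S` is a geodetic set of the digraph `D`: every vertex lies on a shortest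
directed path between two vertices of `S`. -/
def IsGeodetic (D : V → V → Prop) (S : Set V) : Prop :=
  ∀ x, ∃ u ∈ S, ∃ v ∈ S, x ∈ interval D u v

/-- `S` is a geodetic set of minimum cardinality. -/
def IsMinGeodetic (D : V → V → Prop) (S : Set V) : Prop :=
  IsGeodetic D S ∧ ∀ T : Set V, IsGeodetic D T → S.ncard ≤ T.ncard

/-- a source: no incoming arcs. -/
def IsSource (D : V → V → Prop) (v : V) : Prop := ∀ u, ¬ D u v

/-- a sink: no outgoing arcs. -/
def IsSink (D : V → V → Prop) (v : V) : Prop := ∀ u, ¬ D v u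

/-- an extremal vertex: a source or a sink. -/
def Extremal (D : V → V → Prop) (v : V) : Prop := IsSource D v ∨ IsSink D v

/-- the digraph `D` has no directed 2-cycle (an oriented graph). -/
def NoTwoCycle (D : V → V → Prop) : Prop := ∀ u v, D u v → ¬ D v u

/-- the underlying undirected simple graph of a digraph. -/
def underlying (D : V → V → Prop) : SimpleGraph V where
  Adj u v := u ≠ v ∧ (D u v ∨ D v u)
  symm := by constructor; intro u v h; exact ⟨h.1.symm, h.2.symm⟩
  loopless := by constructor; intro v h; exact h.1 rfl

/-- a leaf: a vertex of degree 1 in the underlying undirected graph. -/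
def IsLeaf (D : V → V → Prop) (v : V) : Prop := ((underlying D).neighborSet v).ncard = 1

/-- a ditree: a digraph whose underlying undirected graph is a tree. -/
def IsDitree (D : V → V → Prop) : Prop := (∀ v, ¬ D v v) ∧ (underlying D).IsTree

/-- reachability by directed paths. -/
def Reach (D : V → V → Prop) : V → V → Prop := Relation.ReflTransGen D

/-- `S` is a maximal strongly connected component of `D`. -/
def IsSCC (D : V → V → Prop) (S : Set V) : Prop :=
  S.Nonempty ∧ (∀ u ∈ S, ∀ v ∈ S, Reach D u v) ∧
    ∀ T : Set V, S ⊆ T → (∀ u ∈ T, ∀ v ∈ T, Reach D u v) → T ⊆ S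

/-- a source set: a maximal strongly connected component no arc enters from outside. -/
def IsSourceSet (D : V → V → Prop) (S : Set V) : Prop :=
  IsSCC D S ∧ ∀ u v, v ∈ S → D u v → u ∈ S

/-- a sink set: a maximal strongly connected component no arc leaves. -/
def IsSinkSet (D : V → V → Prop) (S : Set V) : Prop :=
  IsSCC D S ∧ ∀ u v, u ∈ S → D u v → v ∈ S

/-- a transitive vertex. -/
def IsTransitiveVertex (D : V → V → Prop) (v : V) : Prop :=
  ∀ u1 u2, D u1 v → D v u2 → D u1 u2 ∨ u1 = u2

open Relation SimpleGraph

section Walks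

variable {D : V → V → Prop} {u v w : V} {p : List V}

theorem isWalk_iff :
    IsWalk D u v p ↔ p.IsChain D ∧ p.head? = some u ∧ p.getLast? = some v :=
  Iff.rfl

theorem isWalk_singleton : IsWalk D v v [v] := by
  simp [isWalk_iff]

theorem isWalk_cons_cons_iff {a b : V} {t : List V} :
    IsWalk D u v (a :: b :: t) ↔ a = u ∧ D a b ∧ IsWalk D b v (b :: t) := by
  simp only [isWalk_iff, List.isChain_cons_cons, List.head?_cons, Option.some.injEq,
    List.getLast?_cons_cons]
  tauto

theorem IsWalk.cons (h : D u w) (hp : IsWalk D w v p) : IsWalk D u v (u :: p) := by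
  obtain ⟨hc, hh, hl⟩ := hp
  obtain ⟨t, rfl⟩ : ∃ t, p = w :: t := by
    rcases p with _ | ⟨a, t⟩ <;> simp_all
  exact isWalk_cons_cons_iff.2 ⟨rfl, h, hc, hh, hl⟩

theorem IsWalk.reverse (hp : IsWalk D u v p) : IsWalk (flip D) v u p.reverse :=
  ⟨List.isChain_reverse.2 hp.1, by simpa using hp.2.2, by simpa using hp.2.1⟩

theorem IsWalk.head_mem (hp : IsWalk D u v p) : u ∈ p :=
  List.mem_of_mem_head? hp.2.1

theorem exists_isWalk_of_reflTransGen (h : ReflTransGen D u v) : ∃ p, IsWalk D u v p := by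
  induction h using ReflTransGen.head_induction_on with
  | refl => exact ⟨[v], isWalk_singleton⟩
  | head hab _ ih =>
    obtain ⟨p, hp⟩ := ih
    exact ⟨_, hp.cons hab⟩

theorem exists_isWalk_mem_of_reflTransGen {x : V} (hux : ReflTransGen D u x)
    (hxv : ReflTransGen D x v) : ∃ p, IsWalk D u v p ∧ x ∈ p := by
  induction hux using ReflTransGen.head_induction_on with
  | refl =>
    obtain ⟨p, hp⟩ := exists_isWalk_of_reflTransGen hxv
    exact ⟨p, hp, hp.head_mem⟩
  | head hab _ ih =>
    obtain ⟨p, hp, hx⟩ := ih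
    exact ⟨_, hp.cons hab, List.mem_cons_of_mem _ hx⟩

theorem IsWalk.eq_of_mem_of_isSource (hp : IsWalk D u v p) (hw : w ∈ p)
    (hs : IsSource D w) : w = u := by
  induction p generalizing u with
  | nil => simp at hw
  | cons a t ih =>
    rcases t with _ | ⟨b, t⟩
    · simp_all [isWalk_iff]
    obtain ⟨rfl, hab, hbt⟩ := isWalk_cons_cons_iff.1 hp
    rcases List.mem_cons.1 hw with rfl | hw
    · rfl
    · exact absurd (ih hbt hw ▸ hab) (hs a)

theorem IsWalk.eq_of_mem_of_isSink (hp : IsWalk D u v p) (hw : w ∈ p)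
    (hs : IsSink D w) : w = v :=
  hp.reverse.eq_of_mem_of_isSource (List.mem_reverse.2 hw) hs

theorem IsGeodetic.extremal_subset {S : Set V} (hS : IsGeodetic D S) :
    {v | Extremal D v} ⊆ S := by
  intro w hw
  obtain ⟨a, ha, b, hb, p, hp, -, hwp⟩ := hS w
  rcases hw with hs | hs
  · exact hp.eq_of_mem_of_isSource hwp hs ▸ ha
  · exact hp.eq_of_mem_of_isSink hwp hs ▸ hb

end Walks

section Acyclic

variable {D : V → V → Prop} [Finite V]

theorem exists_isSource_reflTransGen (hD : ∀ x, ¬ TransGen D x x) (x : V) :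
    ∃ u, IsSource D u ∧ ReflTransGen D u x := by
  have : Std.Irrefl (TransGen D) := ⟨hD⟩
  obtain ⟨u, hux, hmin⟩ := (Finite.wellFounded_of_trans_of_irrefl (TransGen D)).has_min
    {y | ReflTransGen D y x} ⟨x, ReflTransGen.refl⟩
  exact ⟨u, fun z hz => hmin z (ReflTransGen.head hz hux) (TransGen.single hz), hux⟩

theorem exists_isSink_reflTransGen (hD : ∀ x, ¬ TransGen D x x) (x : V) :
    ∃ v, IsSink D v ∧ ReflTransGen D x v := by
  obtain ⟨v, hv, hxv⟩ := exists_isSource_reflTransGen (D := flip D)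
    (fun y hy => hD y (transGen_swap.1 hy)) x
  exact ⟨v, hv, reflTransGen_swap.1 hxv⟩

end Acyclic

section OrientedForest

variable {D : V → V → Prop} {u v : V} {p q : List V}

theorem isChain_ne_zipWith_tail (hor : NoTwoCycle D) :
    ∀ {p : List V}, p.IsChain D → (p.zipWith (s(·, ·)) p.tail).IsChain (· ≠ ·)
  | [], _ | [_], _ | [_, _], _ => by simp
  | a :: b :: c :: t, h => by
    obtain ⟨hab, hbc, hct⟩ := by simpa only [List.isChain_cons_cons] using h
    refine List.isChain_cons_cons.2
      ⟨?_, isChain_ne_zipWith_tail hor (List.isChain_cons_cons.2 ⟨hbc, hct⟩)⟩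
    rw [Ne, Sym2.eq_iff]
    rintro (⟨rfl, -⟩ | ⟨rfl, -⟩)
    · exact hor a a hab hab
    · exact hor a b hab hbc

theorem IsWalk.exists_isPath (hor : NoTwoCycle D) (hacyc : (underlying D).IsAcyclic)
    (hp : IsWalk D u v p) : ∃ W : (underlying D).Walk u v, W.IsPath ∧ W.support = p := by
  obtain ⟨hchain, hhead, hlast⟩ := hp
  have hne : p ≠ [] := by rintro rfl; simp at hhead
  have hadj : p.IsChain (underlying D).Adj :=
    hchain.imp fun a b hab => ⟨by rintro rfl; exact hor a a hab hab, Or.inl hab⟩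
  let W := (Walk.ofSupport p hne hadj).copy
    (by simpa [List.head?_eq_some_head hne] using hhead)
    (by simpa [List.getLast?_eq_some_getLast hne] using hlast)
  refine ⟨W, ?_, by simp [W]⟩
  rw [hacyc.isPath_iff_isChain, Walk.edges_eq_zipWith_support]
  simpa [W] using isChain_ne_zipWith_tail hor hchain

theorem IsWalk.eq (hor : NoTwoCycle D) (hacyc : (underlying D).IsAcyclic)
    (hp : IsWalk D u v p) (hq : IsWalk D u v q) : p = q := by
  obtain ⟨P, hP, rfl⟩ := hp.exists_isPath hor hacyc
  obtain ⟨Q, hQ, rfl⟩ := hq.exists_isPath hor hacyc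
  exact congrArg (·.val.support) ((hacyc.subsingleton_path u v).elim ⟨P, hP⟩ ⟨Q, hQ⟩)

theorem not_transGen_self (hor : NoTwoCycle D) (hacyc : (underlying D).IsAcyclic) (x : V) :
    ¬ TransGen D x x := by
  intro hx
  obtain ⟨y, hxy, hyx⟩ := TransGen.head'_iff.1 hx
  obtain ⟨l, hl⟩ := exists_isWalk_of_reflTransGen hyx
  obtain rfl : l = [] := (List.cons.inj ((hl.cons hxy).eq hor hacyc isWalk_singleton)).2
  simp [isWalk_iff] at hl

theorem mem_interval_of_isWalk (hor : NoTwoCycle D) (hacyc : (underlying D).IsAcyclic)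
    {x : V} (hp : IsWalk D u v p) (hx : x ∈ p) : x ∈ interval D u v :=
  ⟨p, hp, fun _ hq => (congrArg List.length (hp.eq hor hacyc hq)).le, hx⟩

theorem isGeodetic_extremal [Finite V] (hor : NoTwoCycle D)
    (hacyc : (underlying D).IsAcyclic) : IsGeodetic D {v | Extremal D v} := by
  intro x
  obtain ⟨u, hu, hux⟩ := exists_isSource_reflTransGen (not_transGen_self hor hacyc) x
  obtain ⟨v, hv, hxv⟩ := exists_isSink_reflTransGen (not_transGen_self hor hacyc) x
  obtain ⟨p, hp, hxp⟩ := exists_isWalk_mem_of_reflTransGen hux hxv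
  exact ⟨u, Or.inl hu, v, Or.inr hv, mem_interval_of_isWalk hor hacyc hp hxp⟩

end OrientedForest

/-- In an oriented tree `D` (a digraph with no 2-cycle whose
underlying undirected graph is a tree), the set of extremal vertices of `D` is
a minimum geodetic set of `D`. -/
theorem extremal_isMinGeodetic_of_orientedTree [Fintype V] (D : V → V → Prop)
    (hor : NoTwoCycle D) (htree : (underlying D).IsTree) :
    IsMinGeodetic D {v | Extremal D v} :=
  ⟨isGeodetic_extremal hor htree.isAcyclic,
    fun _ hT => Set.ncard_le_ncard hT.extremal_subset (Set.toFinite _)⟩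

end GeoPaper
end

section
/- Let T be a ditree and let S be a source set or a sink set of T. Then every geodetic set of T contains at least one vertex of S. -/
namespace GeoPaper

variable {V : Type*}

/-! A source set is closed under in-neighbours, so a directed walk through one of its vertices
starts inside it; dually, a walk through a vertex of a sink set ends inside it. Every vertex of
`S` lies on a shortest path between two vertices of the geodetic set, whose start (for a source
set) or end (for a sink set) is therefore a vertex of the geodetic set in `S`. -/

section

variable {D : V → V → Prop} {u v x : V} {p : List V} {S : Set V}

lemma IsWalk.reach_of_mem (hp : IsWalk D u v p) (hx : x ∈ p) : Reach D u x :=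
  hp.1.induction (Reach D u ·) p (fun _ _ hyz hy => hy.tail hyz)
    (fun hne => (List.head_eq_iff_head?_eq_some hne).mpr hp.2.1 ▸ .refl) x hx

lemma IsWalk.reach_end_of_mem (hp : IsWalk D u v p) (hx : x ∈ p) : Reach D x v :=
  hp.1.backwards_induction (Reach D · v) p (fun _ _ hyz hz => hz.head hyz)
    (fun _ => List.getLast_of_mem_getLast? hp.2.2 ▸ .refl) x hx

lemma IsSourceSet.mem_of_reach (hS : IsSourceSet D S) (hux : Reach D u x) (hx : x ∈ S) :
    u ∈ S :=
  hux.head_induction_on hx fun hyz _ hz => hS.2 _ _ hz hyz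

lemma IsSinkSet.mem_of_reach (hS : IsSinkSet D S) (hxv : Reach D x v) (hx : x ∈ S) :
    v ∈ S :=
  hxv.rec hx fun _ hyz hy => hS.2 _ _ hy hyz

end

theorem geodetic_inter_sourceSet_or_sinkSet_nonempty_general (T : V → V → Prop)
    (S : Set V) (hS : IsSourceSet T S ∨ IsSinkSet T S)
    (M : Set V) (hM : IsGeodetic T M) :
    (M ∩ S).Nonempty := by
  obtain ⟨x, hxS⟩ : S.Nonempty := hS.elim (·.1.1) (·.1.1)
  obtain ⟨u, huM, v, hvM, p, hp, -, hxp⟩ := hM x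
  rcases hS with hS | hS
  · exact ⟨u, huM, IsSourceSet.mem_of_reach hS (hp.reach_of_mem hxp) hxS⟩
  · exact ⟨v, hvM, IsSinkSet.mem_of_reach hS (hp.reach_end_of_mem hxp) hxS⟩

/-- Let `T` be a ditree and `S` a source set or a sink set of
`T`. Then every geodetic set of `T` contains at least one vertex of `S`. -/
theorem geodetic_inter_sourceSet_or_sinkSet_nonempty (T : V → V → Prop)
    (hT : IsDitree T) (S : Set V) (hS : IsSourceSet T S ∨ IsSinkSet T S)
    (M : Set V) (hM : IsGeodetic T M) :
    (M ∩ S).Nonempty :=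
  geodetic_inter_sourceSet_or_sinkSet_nonempty_general T S hS M hM

end GeoPaper
end

section
/- Let T be a ditree in which every source set of size at least 2 contains a leaf and every sink set of size at least 2 contains a leaf. Let S be the set consisting of all source vertices, all sink vertices, and all leaves of T. Then S is a geodetic set of T of minimum size. -/
namespace SimpleGraph

variable {V : Type*} {G : SimpleGraph V}

theorem IsAcyclic.length_le_of_isPath (hG : G.IsAcyclic) {u v : V} {p : G.Walk u v}
    (hp : p.IsPath) (w : G.Walk u v) : p.length ≤ w.length := by
  classical
  have : p = w.bypass :=
    congrArg Subtype.val ((hG.subsingleton_path u v).elim ⟨p, hp⟩ ⟨w.bypass, w.bypass_isPath⟩)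
  exact this ▸ w.length_bypass_le_length

theorem IsAcyclic.eq_of_adj_of_notMem_support (hG : G.IsAcyclic) {a b x : V} (ha : G.Adj a x)
    (hb : G.Adj x b) (w : G.Walk a b) (hx : x ∉ w.support) : a = b := by
  classical
  have hb_mem := hG.mem_support_of_ne_mem_support_of_adj_of_isPath (Path.singleton ha).2
    w.bypass_isPath hb (fun h => hx (w.support_bypass_subset_support h))
  simp only [Path.singleton_coe, Walk.support_cons, Walk.support_nil, List.mem_cons,
    List.not_mem_nil, or_false] at hb_mem
  exact hb_mem.resolve_right hb.ne' |>.symm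

theorem IsAcyclic.exists_neighborSet_ncard_eq_one [Finite V] (hG : G.IsAcyclic) {x r : V}
    (hxr : G.Adj x r) : ∃ ℓ, (G.neighborSet ℓ).ncard = 1 ∧ ∃ w : G.Walk r ℓ, x ∉ w.support := by
  classical
  have := Fintype.ofFinite V
  let lengths := {n | ∃ ℓ, ∃ w : G.Walk r ℓ, (Walk.cons hxr w).IsPath ∧ w.length = n}
  have hfin : lengths.Finite := (Set.finite_lt_nat (Fintype.card V)).subset
    fun n ⟨_, w, hw, hn⟩ => by have := hw.length_lt; rw [Walk.length_cons] at this; simp; omega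
  obtain ⟨_, ⟨ℓ, w, hw, rfl⟩, hmax⟩ :=
    hfin.exists_maximal ⟨0, r, .nil, by simp [hxr.ne], rfl⟩
  refine ⟨ℓ, Set.ncard_eq_one.2 ⟨(Walk.cons hxr w).penultimate, ?_⟩,
    w, ((Walk.cons_isPath_iff _ _).1 hw).2⟩
  ext z
  refine ⟨fun (hz : G.Adj ℓ z) => hG.eq_penultimate_of_adj_end hw hz (by_contra fun hzw => ?_), ?_⟩
  · have hlonger : (Walk.cons hxr (w.concat hz)).IsPath := by
      rw [← Walk.concat_cons]; exact hw.concat hzw hz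
    have := hmax ⟨z, _, hlonger, rfl⟩
    simp at this
  · rintro rfl
    exact (Walk.adj_penultimate (by simp)).symm

theorem Walk.isChain_support_of_forall_mem_darts {R : V → V → Prop} {u v : V} (w : G.Walk u v)
    (h : ∀ d ∈ w.darts, R d.fst d.snd) : w.support.IsChain R := by
  induction w with
  | nil => simp
  | cons hab w ih =>
    simp only [Walk.darts_cons, List.forall_mem_cons] at h
    rw [Walk.support_cons, ← w.cons_tail_support]
    exact .cons_cons h.1 (w.cons_tail_support ▸ ih h.2)

end SimpleGraph

namespace GeoPaper

variable {V : Type*}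

open Relation SimpleGraph

theorem exists_initial_reflTransGen [Finite V] (R : V → V → Prop) (y : V) :
    ∃ u, ReflTransGen R u y ∧ ∀ a, ReflTransGen R a u → ReflTransGen R u a := by
  obtain ⟨u, hu, hmin⟩ := Set.exists_min_image {w | ReflTransGen R w y}
    (fun w => {z | ReflTransGen R z w}.ncard) (Set.toFinite _) ⟨y, .refl⟩
  refine ⟨u, hu, fun a hau => ?_⟩
  have hsub : {z | ReflTransGen R z a} ⊆ {z | ReflTransGen R z u} := fun z hz => hz.trans hau
  have heq := Set.eq_of_subset_of_ncard_le hsub (hmin a (hau.trans hu)) (Set.toFinite _)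
  exact heq.ge (show u ∈ {z | ReflTransGen R z u} from .refl)

theorem isSourceSet_of_forall_reach {D : V → V → Prop} {C : Set V} (hne : C.Nonempty)
    (hreach : ∀ a ∈ C, ∀ b ∈ C, Reach D a b) (hclosed : ∀ a b, b ∈ C → D a b → a ∈ C) :
    IsSourceSet D C := by
  refine ⟨⟨hne, hreach, fun C' hCC' hreach' a ha => ?_⟩, hclosed⟩
  obtain ⟨c, hc⟩ := hne
  have hac := hreach' a ha c (hCC' hc)
  clear ha
  induction hac using ReflTransGen.head_induction_on with
  | refl => exact hc
  | head hab _ ih => exact hclosed _ _ ih hab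

def SourceSetsHaveLeaves (T : V → V → Prop) : Prop :=
  ∀ S : Set V, IsSourceSet T S → 2 ≤ S.ncard → ∃ v ∈ S, IsLeaf T v

theorem IsSourceSet.exists_isSource_or_isLeaf [Finite V] {T : V → V → Prop}
    (hirr : ∀ v, ¬ T v v) (hsrc : SourceSetsHaveLeaves T) {C : Set V} (hC : IsSourceSet T C) :
    ∃ v ∈ C, IsSource T v ∨ IsLeaf T v := by
  rcases le_or_gt 2 C.ncard with hcard | hcard
  · obtain ⟨v, hv, hleaf⟩ := hsrc C hC hcard
    exact ⟨v, hv, Or.inr hleaf⟩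
  obtain ⟨v, hv⟩ := hC.1.1
  have hsingle := (Set.ncard_le_one (Set.toFinite C)).1 (by omega)
  exact ⟨v, hv, Or.inl fun u huv => hirr v (hsingle u (hC.2 u v hv huv) v hv ▸ huv)⟩

theorem exists_isSource_or_isLeaf_reflTransGen_of_initial [Finite V] {T R : V → V → Prop}
    (hirr : ∀ v, ¬ T v v) (hsrc : SourceSetsHaveLeaves T) (hRT : ∀ a b, R a b → T a b) {u : V}
    (hu : ∀ a, ReflTransGen R a u → ReflTransGen R u a)
    (hclosed : ∀ a c, ReflTransGen R c u → T a c → R a c) :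
    ∃ ℓ, (IsSource T ℓ ∨ IsLeaf T ℓ) ∧ ReflTransGen R ℓ u := by
  have hC : IsSourceSet T {a | ReflTransGen R a u} :=
    isSourceSet_of_forall_reach ⟨u, .refl⟩
      (fun a ha b hb => ReflTransGen.mono hRT _ _ (ha.trans (hu b hb)))
      (fun a c hc hac => ReflTransGen.head (hclosed a c hc hac) hc)
  obtain ⟨ℓ, hℓ, hℓS⟩ := hC.exists_isSource_or_isLeaf hirr hsrc
  exact ⟨ℓ, hℓS, hℓ⟩

theorem exists_isSource_or_isLeaf_reach [Finite V] {T : V → V → Prop} (hirr : ∀ v, ¬ T v v)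
    (hsrc : SourceSetsHaveLeaves T) (y : V) :
    ∃ ℓ, (IsSource T ℓ ∨ IsLeaf T ℓ) ∧ Reach T ℓ y := by
  obtain ⟨u, huy, hu⟩ := exists_initial_reflTransGen T y
  obtain ⟨ℓ, hℓ, hℓu⟩ := exists_isSource_or_isLeaf_reflTransGen_of_initial hirr hsrc
    (fun _ _ h => h) hu (fun _ _ _ h => h)
  exact ⟨ℓ, hℓ, hℓu.trans huy⟩

section Flip

variable (T : V → V → Prop)

theorem underlying_flip : underlying (flip T) = underlying T := by
  ext a b
  exact and_congr_right fun _ => or_comm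

variable {T}

theorem IsDitree.flip (hT : IsDitree T) : IsDitree (flip T) :=
  ⟨hT.1, underlying_flip T ▸ hT.2⟩

theorem isLeaf_flip {v : V} : IsLeaf (flip T) v ↔ IsLeaf T v := by
  rw [IsLeaf, IsLeaf, underlying_flip]

theorem reach_flip {a b : V} : Reach (flip T) a b ↔ Reach T b a :=
  reflTransGen_swap

theorem isSourceSet_flip {S : Set V} : IsSourceSet (flip T) S ↔ IsSinkSet T S := by
  have hreach (S : Set V) :
      (∀ a ∈ S, ∀ b ∈ S, Reach (flip T) a b) ↔ ∀ a ∈ S, ∀ b ∈ S, Reach T a b := by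
    simp only [reach_flip]
    exact ⟨fun h a ha b hb => h b hb a ha, fun h a ha b hb => h b hb a ha⟩
  simp only [IsSourceSet, IsSinkSet, IsSCC, hreach]
  exact and_congr_right fun _ =>
    ⟨fun h a b ha hab => h b a ha hab, fun h a b ha hab => h b a ha hab⟩

theorem sourceSetsHaveLeaves_flip :
    SourceSetsHaveLeaves (flip T) ↔
      ∀ S : Set V, IsSinkSet T S → 2 ≤ S.ncard → ∃ v ∈ S, IsLeaf T v := by
  simp only [SourceSetsHaveLeaves, isSourceSet_flip, isLeaf_flip]

end Flip

section DeleteVertex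

variable {T : V → V → Prop}

def deleteVertex (T : V → V → Prop) (x : V) : V → V → Prop :=
  fun a b => T a b ∧ a ≠ x ∧ b ≠ x

theorem reflTransGen_deleteVertex_flip {x a b : V} :
    ReflTransGen (deleteVertex (flip T) x) a b ↔ ReflTransGen (deleteVertex T x) b a := by
  have : deleteVertex (flip T) x = flip (deleteVertex T x) := by
    funext a b
    exact propext (and_congr_right fun _ => and_comm)
  rw [this]
  exact reflTransGen_swap

theorem ne_of_reflTransGen_deleteVertex {x a b : V} (h : ReflTransGen (deleteVertex T x) a b)
    (hb : b ≠ x) : a ≠ x := by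
  rcases h.cases_head with rfl | ⟨c, hac, _⟩
  · exact hb
  · exact hac.2.1

theorem exists_reflTransGen_deleteVertex {a b : V} (h : ReflTransGen T a b) (hab : a ≠ b) :
    ∃ c, ReflTransGen (deleteVertex T b) a c ∧ T c b := by
  induction h using ReflTransGen.head_induction_on with
  | refl => exact absurd rfl hab
  | @head a c hac hcb ih =>
    by_cases hc : c = b
    · exact ⟨a, .refl, hc ▸ hac⟩
    · obtain ⟨d, hcd, hdb⟩ := ih hc
      exact ⟨d, .head ⟨hac, hab, hc⟩ hcd, hdb⟩

theorem exists_walk_of_reflTransGen_deleteVertex {G : SimpleGraph V}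
    (hTG : ∀ a b, T a b → G.Adj a b) {x u v : V} (h : ReflTransGen (deleteVertex T x) u v)
    (hv : v ≠ x) : ∃ w : G.Walk u v, (∀ d ∈ w.darts, T d.fst d.snd) ∧ x ∉ w.support := by
  induction h using ReflTransGen.head_induction_on with
  | refl => exact ⟨.nil, by simp, by simpa using hv.symm⟩
  | head hum _ ih =>
    obtain ⟨w, hwT, hwx⟩ := ih
    exact ⟨.cons (hTG _ _ hum.1) w, by simpa using ⟨hum.1, hwT⟩, by simpa using ⟨hum.2.1.symm, hwx⟩⟩

end DeleteVertex

theorem underlying_adj_of_rel {T : V → V → Prop} (hirr : ∀ v, ¬ T v v) {a b : V} (h : T a b) :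
    (underlying T).Adj a b :=
  ⟨fun hab => hirr a (hab ▸ h), Or.inl h⟩

theorem exists_adj_ne_of_not_isLeaf {T : V → V → Prop} {x p : V} (hxl : ¬ IsLeaf T x)
    (hxp : (underlying T).Adj x p) : ∃ r, (underlying T).Adj x r ∧ r ≠ p := by
  by_contra! h
  exact hxl (Set.ncard_eq_one.2 ⟨p, Set.eq_singleton_iff_unique_mem.2 ⟨hxp, h⟩⟩)

def IsFed (T : V → V → Prop) (x p : V) : Prop :=
  ∃ ℓ, (IsSource T ℓ ∨ IsLeaf T ℓ) ∧ ReflTransGen (deleteVertex T x) ℓ p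

section Fed

variable [Finite V] {T : V → V → Prop}

theorem exists_rel_isFed (hT : IsDitree T) (hsrc : SourceSetsHaveLeaves T) {x : V}
    (hxs : ¬ IsSource T x) (hxl : ¬ IsLeaf T x) : ∃ p, T p x ∧ IsFed T x p := by
  obtain ⟨ℓ, hℓ, hℓx⟩ := exists_isSource_or_isLeaf_reach hT.1 hsrc x
  have hℓx' : ℓ ≠ x := by rintro rfl; tauto
  obtain ⟨p, hℓp, hpx⟩ := exists_reflTransGen_deleteVertex hℓx hℓx'
  exact ⟨p, hpx, ℓ, hℓ, hℓp⟩

theorem isFed_or_initial (hT : IsDitree T) (hsrc : SourceSetsHaveLeaves T) {x r : V}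
    (hxr : (underlying T).Adj x r) :
    IsFed T x r ∨ (T x r ∧
      ∀ a, ReflTransGen (deleteVertex T x) a r → ReflTransGen (deleteVertex T x) r a) := by
  obtain ⟨u, hur, hu⟩ := exists_initial_reflTransGen (deleteVertex T x) r
  by_cases hclosed : ∀ a c, ReflTransGen (deleteVertex T x) c u → T a c → deleteVertex T x a c
  · obtain ⟨ℓ, hℓ, hℓu⟩ := exists_isSource_or_isLeaf_reflTransGen_of_initial hT.1 hsrc
      (fun _ _ h => h.1) hu hclosed
    exact Or.inl ⟨ℓ, hℓ, hℓu.trans hur⟩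
  -- the initial component of `r` is entered from outside, which in a tree forces the arc `x → r`
  push Not at hclosed
  obtain ⟨a, c, hcu, hac, hnot⟩ := hclosed
  have hcr := hcu.trans hur
  have hcx : c ≠ x := ne_of_reflTransGen_deleteVertex hcr hxr.ne'
  have hax : a = x := by
    by_contra hax
    exact hnot ⟨hac, hax, hcx⟩
  rw [hax] at hac
  obtain ⟨w, -, hw⟩ := exists_walk_of_reflTransGen_deleteVertex (G := underlying T)
    (fun _ _ => underlying_adj_of_rel hT.1) hcr hxr.ne'
  obtain rfl : c = r :=
    hT.2.isAcyclic.eq_of_adj_of_notMem_support (underlying_adj_of_rel hT.1 hac).symm hxr w hw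
  exact Or.inr ⟨hac, fun b hbc => hcu.trans (hu b (hbc.trans hcu))⟩

theorem isFed_of_initial_of_terminal (hT : IsDitree T) {x r : V} (hxr : (underlying T).Adj x r)
    (hinit : ∀ a, ReflTransGen (deleteVertex T x) a r → ReflTransGen (deleteVertex T x) r a)
    (hterm : ∀ a, ReflTransGen (deleteVertex T x) r a → ReflTransGen (deleteVertex T x) a r) :
    IsFed T x r := by
  obtain ⟨ℓ, hℓ, w, hw⟩ := hT.2.isAcyclic.exists_neighborSet_ncard_eq_one hxr
  refine ⟨ℓ, Or.inr hℓ, ?_⟩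
  -- the strong component of `r` in `T - x` is closed under arcs both ways, so it contains `ℓ`
  suffices h : ∀ a b (w : (underlying T).Walk a b), x ∉ w.support →
      ReflTransGen (deleteVertex T x) a r → ReflTransGen (deleteVertex T x) b r from
    h r ℓ w hw .refl
  intro a b w
  induction w with
  | nil => exact fun _ h => h
  | @cons a c _ hac w ih =>
    intro hx har
    simp only [Walk.support_cons, List.mem_cons, not_or] at hx
    have hcx : c ≠ x := fun h => hx.2 (h ▸ w.start_mem_support)
    refine ih hx.2 ?_
    rcases hac.2 with h | h
    · exact hterm c ((hinit a har).tail ⟨h, Ne.symm hx.1, hcx⟩)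
    · exact .head ⟨h, hcx, Ne.symm hx.1⟩ har

theorem isFed_or_isFed_flip (hT : IsDitree T) (hsrc : SourceSetsHaveLeaves T)
    (hsnk : SourceSetsHaveLeaves (flip T)) {x r : V} (hxr : (underlying T).Adj x r) :
    (T r x ∧ IsFed T x r) ∨ (T x r ∧ IsFed (flip T) x r) := by
  have hxr' : (underlying (flip T)).Adj x r := (underlying_flip T).symm ▸ hxr
  rcases isFed_or_initial hT hsrc hxr, isFed_or_initial hT.flip hsnk hxr' with
    ⟨hr | ⟨hxr_arc, hinit⟩, hr' | ⟨hrx, hterm⟩⟩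
  · exact hxr.2.symm.imp (⟨·, hr⟩) (⟨·, hr'⟩)
  · exact Or.inl ⟨hrx, hr⟩
  · exact Or.inr ⟨hxr_arc, hr'⟩
  · refine Or.inl ⟨hrx, isFed_of_initial_of_terminal hT hxr hinit fun a h => ?_⟩
    exact reflTransGen_deleteVertex_flip.1 (hterm a (reflTransGen_deleteVertex_flip.2 h))

theorem exists_isFed_pair (hT : IsDitree T) (hsrc : SourceSetsHaveLeaves T)
    (hsnk : SourceSetsHaveLeaves (flip T)) {x : V} (hxsrc : ¬ IsSource T x)
    (hxsnk : ¬ IsSink T x) (hxl : ¬ IsLeaf T x) :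
    ∃ p q, p ≠ q ∧ T p x ∧ T x q ∧ IsFed T x p ∧ IsFed (flip T) x q := by
  obtain ⟨p, hpx, hp⟩ := exists_rel_isFed hT hsrc hxsrc hxl
  obtain ⟨q, hxq, hq⟩ := exists_rel_isFed hT.flip hsnk hxsnk (isLeaf_flip.not.2 hxl)
  obtain ⟨r, hxr, hrp⟩ := exists_adj_ne_of_not_isLeaf hxl (underlying_adj_of_rel hT.1 hpx).symm
  rcases isFed_or_isFed_flip hT hsrc hsnk hxr with ⟨hrx, hr⟩ | ⟨hxr', hr⟩
  · by_cases hqp : q = p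
    · exact ⟨r, q, hqp ▸ hrp, hrx, hxq, hr, hq⟩
    · exact ⟨p, q, Ne.symm hqp, hpx, hxq, hp, hq⟩
  · exact ⟨p, r, Ne.symm hrp, hpx, hxr', hp, hr⟩

end Fed

section Interval

variable {T : V → V → Prop}

theorem mem_interval_self (x : V) : x ∈ interval T x x :=
  ⟨[x], ⟨.singleton x, rfl, rfl⟩,
    fun q hq => List.length_pos_of_ne_nil (by rintro rfl; simp [IsWalk] at hq), by simp⟩

theorem mem_interval_of_mem_support (hT : IsDitree T) {u v a : V} (P : (underlying T).Walk u v)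
    (hP : P.IsPath) (hPT : ∀ d ∈ P.darts, T d.fst d.snd) (ha : a ∈ P.support) :
    a ∈ interval T u v := by
  refine ⟨P.support, ⟨P.isChain_support_of_forall_mem_darts hPT, ?_, ?_⟩, fun q hq => ?_, ha⟩
  · rw [← P.cons_tail_support]; rfl
  · rw [List.getLast?_eq_some_getLast P.support_ne_nil, P.getLast_support]
  obtain ⟨hqT, hqu, hqv⟩ := hq
  have hne : q ≠ [] := by rintro rfl; simp at hqu
  have hqG : q.IsChain (underlying T).Adj := hqT.imp fun _ _ => underlying_adj_of_rel hT.1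
  have hu : q.head hne = u := by simpa [List.head?_eq_some_head hne] using hqu
  have hv : q.getLast hne = v := by simpa [List.getLast?_eq_some_getLast hne] using hqv
  have := hT.2.isAcyclic.length_le_of_isPath hP ((Walk.ofSupport q hne hqG).copy hu hv)
  rw [Walk.length_copy, Walk.length_ofSupport] at this
  have := List.length_pos_of_ne_nil hne
  rw [P.length_support]
  omega

theorem mem_interval_of_reflTransGen (hT : IsDitree T) {x p q u v : V} (hpq : p ≠ q)
    (hpx : T p x) (hxq : T x q) (hup : ReflTransGen (deleteVertex T x) u p)
    (hvq : ReflTransGen (deleteVertex (flip T) x) v q) : x ∈ interval T u v := by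
  classical
  have hadj : ∀ a b, T a b → (underlying T).Adj a b := fun _ _ => underlying_adj_of_rel hT.1
  obtain ⟨w₁, hw₁T, hw₁x⟩ := exists_walk_of_reflTransGen_deleteVertex hadj hup
    (hadj _ _ hpx).ne
  obtain ⟨w₂, hw₂T, hw₂x⟩ := exists_walk_of_reflTransGen_deleteVertex
    (fun a b h => (hadj b a h).symm) hvq (hadj _ _ hxq).ne'
  let W := w₁.append (.cons (hadj _ _ hpx) (.cons (hadj _ _ hxq) w₂.reverse))
  have hWT : ∀ d ∈ W.darts, T d.fst d.snd := by
    simp only [W, Walk.darts_append, Walk.darts_cons, Walk.darts_reverse, List.mem_append,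
      List.mem_cons, List.mem_reverse, List.mem_map]
    rintro d (hd | rfl | rfl | ⟨d, hd, rfl⟩)
    exacts [hw₁T d hd, hpx, hxq, hw₂T d hd]
  apply mem_interval_of_mem_support hT W.bypass W.bypass_isPath
    (fun d hd => hWT d (W.darts_bypass_subset_darts hd))
  -- otherwise `p` and `q` would be joined avoiding `x`, closing a cycle through `x`
  by_contra hx
  exact hpq (hT.2.isAcyclic.eq_of_adj_of_notMem_support (hadj _ _ hpx) (hadj _ _ hxq)
    (w₁.reverse.append (W.bypass.append w₂)) (by simp [Walk.mem_support_append_iff, *]))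

theorem eq_of_isSource_of_mem_interval {u v a : V} (ha : IsSource T a)
    (h : a ∈ interval T u v) : a = u := by
  obtain ⟨p, ⟨hc, hu, -⟩, -, hap⟩ := h
  obtain ⟨s, t, rfl⟩ := List.append_of_mem hap
  rcases List.eq_nil_or_concat s with rfl | ⟨s, c, rfl⟩
  · simpa using hu
  · simp only [List.concat_eq_append, List.append_assoc, List.cons_append, List.nil_append] at hc
    exact absurd (List.isChain_append_cons_cons.1 hc).2.1 (ha c)

theorem eq_of_isSink_of_mem_interval {u v a : V} (ha : IsSink T a)
    (h : a ∈ interval T u v) : a = v := by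
  obtain ⟨p, ⟨hc, -, hv⟩, -, hap⟩ := h
  obtain ⟨s, t, rfl⟩ := List.append_of_mem hap
  rcases t with _ | ⟨d, t⟩
  · simpa using hv
  · exact absurd (List.isChain_append_cons_cons.1 hc).2.1 (ha d)

theorem eq_or_eq_of_isLeaf_of_mem_interval (hirr : ∀ v, ¬ T v v) {u v a : V} (ha : IsLeaf T a)
    (h : a ∈ interval T u v) : a = u ∨ a = v := by
  obtain ⟨p, ⟨hc, hu, hv⟩, hmin, hap⟩ := h
  obtain ⟨s, t, rfl⟩ := List.append_of_mem hap
  rcases List.eq_nil_or_concat s with rfl | ⟨s, c, rfl⟩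
  · simpa using Or.inl hu
  rcases t with _ | ⟨d, t⟩
  · simpa using Or.inr hv
  simp only [List.concat_eq_append, List.append_assoc, List.cons_append, List.nil_append]
    at hc hu hv hmin
  have hca : T c a := (List.isChain_split.1 hc).2.rel
  have had : T a d := (List.isChain_split.1 hc).2.tail.rel
  -- the only neighbour of the leaf `a` is both its predecessor and successor
  obtain rfl : c = d := by
    obtain ⟨z, hz⟩ := Set.ncard_eq_one.1 ha
    have hc' : c ∈ (underlying T).neighborSet a := (underlying_adj_of_rel hirr hca).symm
    have hd' : d ∈ (underlying T).neighborSet a := underlying_adj_of_rel hirr had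
    rw [hz] at hc' hd'
    exact hc'.trans hd'.symm
  have hshort : IsWalk T u v (s ++ c :: t) := by
    refine ⟨List.isChain_split.2 ⟨(List.isChain_split.1 hc).1, ?_⟩, ?_, ?_⟩
    · exact ((List.isChain_split.1 hc).2.tail).tail
    · simpa [List.head?_append] using hu
    · simpa [List.getLast?_append] using hv
  have := hmin _ hshort
  simp at this

theorem subset_of_isGeodetic (hirr : ∀ v, ¬ T v v) {S : Set V} (hS : IsGeodetic T S) :
    {v | IsSource T v ∨ IsSink T v ∨ IsLeaf T v} ⊆ S := by
  intro a ha
  obtain ⟨u, hu, v, hv, hav⟩ := hS a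
  rcases ha with ha | ha | ha
  · exact eq_of_isSource_of_mem_interval ha hav ▸ hu
  · exact eq_of_isSink_of_mem_interval ha hav ▸ hv
  · rcases eq_or_eq_of_isLeaf_of_mem_interval hirr ha hav with rfl | rfl
    exacts [hu, hv]

end Interval

/-- Let `T` be a ditree in which every source set of size at
least 2 contains a leaf and every sink set of size at least 2 contains a leaf.
Then the set of all sources, sinks and leaves of `T` is a minimum geodetic set
of `T`. -/
theorem sources_sinks_leaves_isMinGeodetic [Fintype V] (T : V → V → Prop)
    (hT : IsDitree T)
    (hsrc : ∀ S : Set V, IsSourceSet T S → 2 ≤ S.ncard → ∃ v ∈ S, IsLeaf T v)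
    (hsnk : ∀ S : Set V, IsSinkSet T S → 2 ≤ S.ncard → ∃ v ∈ S, IsLeaf T v) :
    IsMinGeodetic T {v | IsSource T v ∨ IsSink T v ∨ IsLeaf T v} := by
  refine ⟨fun x => ?_, fun S hS => Set.ncard_le_ncard (subset_of_isGeodetic hT.1 hS)⟩
  by_cases hx : IsSource T x ∨ IsSink T x ∨ IsLeaf T x
  · exact ⟨x, hx, x, hx, mem_interval_self x⟩
  simp only [not_or] at hx
  obtain ⟨p, q, hpq, hpx, hxq, ⟨u, hu, hup⟩, ⟨v, hv, hvq⟩⟩ :=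
    exists_isFed_pair hT hsrc (sourceSetsHaveLeaves_flip.2 hsnk) hx.1 hx.2.1 hx.2.2
  exact ⟨u, hu.imp_right Or.inr, v, Or.inr (hv.imp id isLeaf_flip.1),
    mem_interval_of_reflTransGen hT hpq hpx hxq hup hvq⟩

end GeoPaper
end
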